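/- Let (X, f_{1,∞}) be a non-autonomous system with each f_n surjective, f_n → f uniformly, {f_n^k}_{k∈ℕ} converging collectively to {f^k}_{k∈ℕ}, and f_{1,∞} feebly open. Then (X, f_{1,∞}) is strongly multi-sensitive if and only if (X, f) is strongly multi-sensitive. -/

import Mathlib

open Metric Set MeasureTheory

/-- `nacomp f n = f_n ∘ ⋯ ∘ f_1` (and `nacomp f 0 = id`): the time-`n` map of the
non-autonomous system `f_{1,∞}`. -/
def nacomp {X : Type*} (f : ℕ → X → X) : ℕ → X → X
  | 0 => id
  | n + 1 => f (n + 1) ∘ nacomp f n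

/-- `compFrom f i k = f_{i+k-1} ∘ ⋯ ∘ f_i`, i.e. `f_i^k`. -/
def compFrom {X : Type*} (f : ℕ → X → X) (i : ℕ) : ℕ → X → X
  | 0 => id
  | k + 1 => f (i + k) ∘ compFrom f i k

/-- Multi-sensitivity of `f_{1,∞}` with respect to the vector `(v 0, …, v (r-1))`. -/
def multiSensWrt {X : Type*} [MetricSpace X] (f : ℕ → X → X) (r : ℕ) (v : ℕ → ℕ) : Prop :=
  ∃ δ > 0, ∀ U : ℕ → Set X, (∀ i < r, IsOpen (U i) ∧ (U i).Nonempty) →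
    ∃ n ≥ 1, ∀ i < r, ∃ x ∈ U i, ∃ y ∈ U i,
      δ < dist (nacomp f (n * v i) x) (nacomp f (n * v i) y)

/-- Strong multi-sensitivity: multi-sensitivity w.r.t. every vector in `ℕ^r`, every `r`. -/
def strongMultiSens {X : Type*} [MetricSpace X] (f : ℕ → X → X) : Prop :=
  ∀ r ≥ 1, ∀ v : ℕ → ℕ, (∀ i < r, 1 ≤ v i) → multiSensWrt f r v

/-- `𝒩`-sensitivity: multi-sensitivity w.r.t. `(1, 2, …, r)` for every `r`. -/
def nSens {X : Type*} [MetricSpace X] (f : ℕ → X → X) : Prop :=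
  ∀ r ≥ 1, multiSensWrt f r (fun i => i + 1)

/-- Sensitivity of the non-autonomous system. -/
def sens {X : Type*} [MetricSpace X] (f : ℕ → X → X) : Prop :=
  ∃ δ > 0, ∀ U : Set X, IsOpen U → U.Nonempty →
    ∃ n ≥ 1, ∃ x ∈ U, ∃ y ∈ U, δ < dist (nacomp f n x) (nacomp f n y)

/-- Multi-sensitivity of the non-autonomous system. -/
def multiSens {X : Type*} [MetricSpace X] (f : ℕ → X → X) : Prop :=
  ∃ δ > 0, ∀ r : ℕ, ∀ U : ℕ → Set X, (∀ i < r, IsOpen (U i) ∧ (U i).Nonempty) →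
    ∃ n ≥ 1, ∀ i < r, ∃ x ∈ U i, ∃ y ∈ U i, δ < dist (nacomp f n x) (nacomp f n y)

/-- Cofinite sensitivity: for some `δ > 0`, for every nonempty open `U` the set
`N_{f_{1,∞}}(U, δ)` is cofinite in `{1, 2, …}`. -/
def cofSens {X : Type*} [MetricSpace X] (f : ℕ → X → X) : Prop :=
  ∃ δ > 0, ∀ U : Set X, IsOpen U → U.Nonempty →
    {n : ℕ | 1 ≤ n ∧ ¬ ∃ x ∈ U, ∃ y ∈ U, δ < dist (nacomp f n x) (nacomp f n y)}.Finite

/-- Autonomous analogue of `multiSensWrt` for a single map `g`. -/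
def multiSensWrtAuto {X : Type*} [MetricSpace X] (g : X → X) (r : ℕ) (v : ℕ → ℕ) : Prop :=
  ∃ δ > 0, ∀ U : ℕ → Set X, (∀ i < r, IsOpen (U i) ∧ (U i).Nonempty) →
    ∃ n ≥ 1, ∀ i < r, ∃ x ∈ U i, ∃ y ∈ U i,
      δ < dist (g^[n * v i] x) (g^[n * v i] y)

def strongMultiSensAuto {X : Type*} [MetricSpace X] (g : X → X) : Prop :=
  ∀ r ≥ 1, ∀ v : ℕ → ℕ, (∀ i < r, 1 ≤ v i) → multiSensWrtAuto g r v

def nSensAuto {X : Type*} [MetricSpace X] (g : X → X) : Prop :=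
  ∀ r ≥ 1, multiSensWrtAuto g r (fun i => i + 1)

/-- `k`-periodicity of the non-autonomous system: `f_{j+kl} = f_j` for `l ≥ 1`, `1 ≤ j ≤ k`. -/
def kPeriodic {X : Type*} (f : ℕ → X → X) (k : ℕ) : Prop :=
  1 ≤ k ∧ ∀ l ≥ 1, ∀ j, 1 ≤ j → j ≤ k → f (j + k * l) = f j

/-- Multi-transitivity of the non-autonomous system. -/
def multiTrans {X : Type*} [TopologicalSpace X] (f : ℕ → X → X) : Prop :=
  ∀ m ≥ 1, ∀ U V : ℕ → Set X,
    (∀ i < m, IsOpen (U i) ∧ (U i).Nonempty ∧ IsOpen (V i) ∧ (V i).Nonempty) →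
    ∃ k ≥ 1, ∀ i < m, (nacomp f ((i + 1) * k) '' U i ∩ V i).Nonempty

/-- Multi-sensitivity w.r.t. a vector, for an explicit distance function `ρ`
(used for products equipped with the metric `√(d₁² + d₂²)`). -/
def multiSensWrtD {Z : Type*} [TopologicalSpace Z] (ρ : Z → Z → ℝ) (f : ℕ → Z → Z)
    (r : ℕ) (v : ℕ → ℕ) : Prop :=
  ∃ δ > 0, ∀ U : ℕ → Set Z, (∀ i < r, IsOpen (U i) ∧ (U i).Nonempty) →
    ∃ n ≥ 1, ∀ i < r, ∃ x ∈ U i, ∃ y ∈ U i,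
      δ < ρ (nacomp f (n * v i) x) (nacomp f (n * v i) y)

def strongMultiSensD {Z : Type*} [TopologicalSpace Z] (ρ : Z → Z → ℝ) (f : ℕ → Z → Z) : Prop :=
  ∀ r ≥ 1, ∀ v : ℕ → ℕ, (∀ i < r, 1 ≤ v i) → multiSensWrtD ρ f r v

def nSensD {Z : Type*} [TopologicalSpace Z] (ρ : Z → Z → ℝ) (f : ℕ → Z → Z) : Prop :=
  ∀ r ≥ 1, multiSensWrtD ρ f r (fun i => i + 1)

/-- The metric `√(d₁² + d₂²)` on a product of metric spaces. -/
noncomputable def prodDist {X Y : Type*} [MetricSpace X] [MetricSpace Y]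
    (p q : X × Y) : ℝ :=
  Real.sqrt (dist p.1 q.1 ^ 2 + dist p.2 q.2 ^ 2)

/-- `N_{f_{1,∞}^{[v]}}(U, δ)` for an explicit distance function `ρ`. -/
def NsetD {Z : Type*} (ρ : Z → Z → ℝ) (f : ℕ → Z → Z) (v : ℕ) (U : Set Z) (δ : ℝ) : Set ℕ :=
  {n : ℕ | 1 ≤ n ∧ ∃ x ∈ U, ∃ y ∈ U, δ < ρ (nacomp f (n * v) x) (nacomp f (n * v) y)}

/-- `N_{f_{1,∞}^{[v]} × g_{1,∞}^{[v']}}(U × U', δ)` for the product metric `√(d₁² + d₂²)`. -/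
noncomputable def NsetProd {X Y : Type*} [MetricSpace X] [MetricSpace Y]
    (f : ℕ → X → X) (g : ℕ → Y → Y) (v v' : ℕ) (U : Set X) (U' : Set Y) (δ : ℝ) : Set ℕ :=
  {n : ℕ | 1 ≤ n ∧ ∃ p ∈ U ×ˢ U', ∃ q ∈ U ×ˢ U',
    δ < prodDist (nacomp f (n * v) p.1, nacomp g (n * v') p.2)
                 (nacomp f (n * v) q.1, nacomp g (n * v') q.2)}

lemma nacomp_add_apply {X : Type*} (f : ℕ → X → X) (m k : ℕ) (x : X) :
    nacomp f (m + k) x = compFrom f (m + 1) k (nacomp f m x) := by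
  induction k with
  | zero => rfl
  | succ k ih =>
    calc nacomp f (m + (k + 1)) x = f (m + k + 1) (nacomp f (m + k) x) := rfl
    _ = f (m + 1 + k) (compFrom f (m + 1) k (nacomp f m x)) := by
        rw [ih, show m + k + 1 = m + 1 + k by omega]
    _ = compFrom f (m + 1) (k + 1) (nacomp f m x) := rfl

lemma nacomp_continuous {X : Type*} [TopologicalSpace X] (f : ℕ → X → X)
    (hf : ∀ n, Continuous (f n)) (m : ℕ) : Continuous (nacomp f m) := by
  induction m with
  | zero => exact continuous_id
  | succ m ih => exact (hf (m + 1)).comp ih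

lemma nacomp_surjective {X : Type*} (f : ℕ → X → X)
    (hsurj : ∀ n ≥ 1, Function.Surjective (f n)) (m : ℕ) :
    Function.Surjective (nacomp f m) := by
  induction m with
  | zero => exact Function.surjective_id
  | succ m ih => exact (hsurj (m + 1) (Nat.le_add_left 1 m)).comp ih

lemma nacomp_feeble {X : Type*} [TopologicalSpace X] (f : ℕ → X → X)
    (hfeeble : ∀ n ≥ 1, ∀ U : Set X, IsOpen U → U.Nonempty →
      (interior (f n '' U)).Nonempty) (m : ℕ) :
    ∀ U : Set X, IsOpen U → U.Nonempty → (interior (nacomp f m '' U)).Nonempty := by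
  induction m with
  | zero =>
    intro U hU hne
    have : nacomp f 0 '' U = U := Set.image_id U
    rw [this, hU.interior_eq]; exact hne
  | succ m ih =>
    intro U hU hne
    obtain ⟨z, hz⟩ := hfeeble (m + 1) (Nat.le_add_left 1 m) _ isOpen_interior (ih U hU hne)
    have hsub : f (m + 1) '' interior (nacomp f m '' U) ⊆ nacomp f (m + 1) '' U := by
      have : nacomp f (m + 1) '' U = f (m + 1) '' (nacomp f m '' U) := Set.image_comp _ _ _
      rw [this]
      exact Set.image_mono interior_subset
    exact ⟨z, interior_mono hsub hz⟩

/-- under surjectivity, uniform convergence, collective convergence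
and feeble openness, `f_{1,∞}` is strongly multi-sensitive iff the limit `F` is. -/
theorem stmt_13 {X : Type*} [MetricSpace X] [CompactSpace X] (f : ℕ → X → X) (F : X → X)
    (hf : ∀ n, Continuous (f n)) (hFc : Continuous F)
    (hsurj : ∀ n ≥ 1, Function.Surjective (f n))
    (hunif : ∀ ε > 0, ∃ N, ∀ n ≥ N, ∀ x, dist (f n x) (F x) < ε)
    (hcoll : ∀ ε > 0, ∃ N₀, ∀ N ≥ N₀, ∀ k, ∀ x, dist (compFrom f N k x) (F^[k] x) < ε)
    (hfeeble : ∀ n ≥ 1, ∀ U : Set X, IsOpen U → U.Nonempty →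
      (interior (f n '' U)).Nonempty) :
    strongMultiSens f ↔ strongMultiSensAuto F := by
  classical
  constructor
  · -- f strongly multi-sensitive → F strongly multi-sensitive
    intro hsens r hr v hv
    obtain ⟨δ, hδ, hsep⟩ := hsens r hr v hv
    obtain ⟨N₀, hN₀⟩ := hcoll (δ / 3) (by linarith)
    refine ⟨δ / 3, by linarith, ?_⟩
    intro W hW
    set Upre : ℕ → Set X := fun i => (nacomp f (N₀ * v i)) ⁻¹' (W i) with hUpre_def
    have hUpre_ne : ∀ i < r, (Upre i).Nonempty := by
      intro i hi
      obtain ⟨w, hw⟩ := (hW i hi).2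
      obtain ⟨x, hx⟩ := nacomp_surjective f hsurj (N₀ * v i) w
      exact ⟨x, by simp only [hUpre_def, Set.mem_preimage, hx]; exact hw⟩
    have hX : Nonempty X := ⟨(hUpre_ne 0 hr).choose⟩
    set p : ℕ → X := fun i =>
      if h : (Upre i).Nonempty then h.choose else Classical.arbitrary X with hp_def
    have hp : ∀ i < r, p i ∈ Upre i := by
      intro i hi
      simp only [hp_def, dif_pos (hUpre_ne i hi)]
      exact (hUpre_ne i hi).choose_spec
    set U' : ℕ → Set X := fun i => Upre i ∩ ⋂ j ∈ Finset.range (N₀ * v i + 1),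
      (nacomp f j) ⁻¹' (Metric.ball (nacomp f j (p i)) (δ / 2)) with hU'_def
    have hU' : ∀ i < r, IsOpen (U' i) ∧ (U' i).Nonempty := by
      intro i hi
      constructor
      · exact ((nacomp_continuous f hf _).isOpen_preimage _ (hW i hi).1).inter
          (isOpen_biInter_finset fun j _ =>
            (nacomp_continuous f hf j).isOpen_preimage _ isOpen_ball)
      · refine ⟨p i, hp i hi, ?_⟩
        refine Set.mem_iInter₂.mpr fun j _ => ?_
        simp only [Set.mem_preimage]
        exact mem_ball_self (by linarith)
    have hclose : ∀ i < r, ∀ x ∈ U' i, ∀ y ∈ U' i, ∀ j ≤ N₀ * v i,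
        dist (nacomp f j x) (nacomp f j y) < δ := by
      intro i hi x hx y hy j hj
      have hjm : j ∈ Finset.range (N₀ * v i + 1) := Finset.mem_range.mpr (by omega)
      have h1 := Set.mem_iInter₂.mp hx.2 j hjm
      have h2 := Set.mem_iInter₂.mp hy.2 j hjm
      simp only [Set.mem_preimage, Metric.mem_ball] at h1 h2
      calc dist (nacomp f j x) (nacomp f j y)
          ≤ dist (nacomp f j x) (nacomp f j (p i)) + dist (nacomp f j (p i)) (nacomp f j y) :=
            dist_triangle _ _ _
        _ < δ / 2 + δ / 2 := by rw [dist_comm (nacomp f j (p i))]; linarith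
        _ = δ := by ring
    obtain ⟨n, hn1, hsn⟩ := hsep U' hU'
    have hngt : N₀ < n := by
      by_contra h
      push_neg at h
      obtain ⟨x, hx, y, hy, hd⟩ := hsn 0 hr
      have := hclose 0 hr x hx y hy (n * v 0) (Nat.mul_le_mul_right _ h)
      linarith
    refine ⟨n - N₀, by omega, ?_⟩
    intro i hi
    obtain ⟨x, hx, y, hy, hd⟩ := hsn i hi
    refine ⟨nacomp f (N₀ * v i) x, hx.1, nacomp f (N₀ * v i) y, hy.1, ?_⟩
    have key : ∀ z : X, nacomp f (n * v i) z
        = compFrom f (N₀ * v i + 1) ((n - N₀) * v i) (nacomp f (N₀ * v i) z) := by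
      intro z
      rw [← nacomp_add_apply]
      congr 1
      rw [← Nat.add_mul]
      congr 1
      omega
    have hNb : N₀ * v i + 1 ≥ N₀ := by
      have h1 : N₀ * 1 ≤ N₀ * v i := Nat.mul_le_mul_left _ (hv i hi)
      omega
    have t1 := hN₀ (N₀ * v i + 1) hNb ((n - N₀) * v i) (nacomp f (N₀ * v i) x)
    have t2 := hN₀ (N₀ * v i + 1) hNb ((n - N₀) * v i) (nacomp f (N₀ * v i) y)
    rw [key x, key y] at hd
    have t := dist_triangle4
      (compFrom f (N₀ * v i + 1) ((n - N₀) * v i) (nacomp f (N₀ * v i) x))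
      (F^[(n - N₀) * v i] (nacomp f (N₀ * v i) x))
      (F^[(n - N₀) * v i] (nacomp f (N₀ * v i) y))
      (compFrom f (N₀ * v i + 1) ((n - N₀) * v i) (nacomp f (N₀ * v i) y))
    rw [dist_comm (F^[(n - N₀) * v i] (nacomp f (N₀ * v i) y))] at t
    linarith
  · -- F strongly multi-sensitive → f strongly multi-sensitive
    intro hF r hr v hv
    obtain ⟨δ, hδ, hsep⟩ := hF r hr v hv
    obtain ⟨N₀, hN₀⟩ := hcoll (δ / 3) (by linarith)
    refine ⟨δ / 3, by linarith, ?_⟩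
    intro U hU
    set V : ℕ → Set X := fun i => interior (nacomp f (N₀ * v i) '' U i) with hV_def
    have hV : ∀ i < r, IsOpen (V i) ∧ (V i).Nonempty := fun i hi =>
      ⟨isOpen_interior, nacomp_feeble f hfeeble _ _ (hU i hi).1 (hU i hi).2⟩
    obtain ⟨m, hm1, hsm⟩ := hsep V hV
    refine ⟨N₀ + m, by omega, ?_⟩
    intro i hi
    obtain ⟨a, ha, b, hb, hd⟩ := hsm i hi
    obtain ⟨x, hx, hxa⟩ := interior_subset ha
    obtain ⟨y, hy, hyb⟩ := interior_subset hb
    refine ⟨x, hx, y, hy, ?_⟩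
    have key : ∀ z : X, nacomp f ((N₀ + m) * v i) z
        = compFrom f (N₀ * v i + 1) (m * v i) (nacomp f (N₀ * v i) z) := by
      intro z
      rw [← nacomp_add_apply]
      congr 1
      rw [← Nat.add_mul]
    rw [key x, key y, hxa, hyb]
    have hNb : N₀ * v i + 1 ≥ N₀ := by
      have h1 : N₀ * 1 ≤ N₀ * v i := Nat.mul_le_mul_left _ (hv i hi)
      omega
    have t1 := hN₀ (N₀ * v i + 1) hNb (m * v i) a
    have t2 := hN₀ (N₀ * v i + 1) hNb (m * v i) b
    have t := dist_triangle4
      (F^[m * v i] a) (compFrom f (N₀ * v i + 1) (m * v i) a)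
      (compFrom f (N₀ * v i + 1) (m * v i) b) (F^[m * v i] b)
    rw [dist_comm (F^[m * v i] a) (compFrom f (N₀ * v i + 1) (m * v i) a)] at t
    linarith
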